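/- Let A be an m×t real matrix with rows a_1, …, a_m ∈ ℝ^t and let γ ∈ (0,1). Then there exist nonnegative reals w_1, …, w_m, at most ⌈t/γ²⌉ of which are nonzero, such that for every v ∈ ℝ^t: (1−γ)·‖Av‖₂ ≤ (Σ_{i=1}^m w_i·⟨a_i, v⟩²)^{1/2} ≤ (1+γ)·‖Av‖₂. -/

import Mathlib

/-!
Write `A = Q B` where the columns of `Q` are an orthonormal basis of the column span of `A`. The
rows `q_i` of `Q` are then in isotropic position, `∑ q_i q_iᵀ = 1`, and `⟨a_i, v⟩ = ⟨q_i, B v⟩`,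
so it suffices to sparsify an isotropic family in dimension `r ≤ t`.

For that we follow Batson–Spielman–Srivastava. Keep `l • 1 < S < u • 1` together with the
barrier potentials `tr (u • 1 - S)⁻¹ ≤ εU` and `tr (S - l • 1)⁻¹ ≤ εL`. By Sherman–Morrison, a
rank-one update `S + s q_i q_iᵀ` keeps both potentials while `u` moves to `u + δU` and `l` to
`l + δL` as soon as `U(q_i) ≤ 1/s ≤ L(q_i)`; summing over `i` gives `∑ U(q_i) ≤ 1/δU + εU` and
`∑ L(q_i) ≥ 1/δL - εL` (the latter by a trace Cauchy–Schwarz), so some `i` works when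
`1/δU + εU ≤ 1/δL - εL`. With `δL = 1`, `εL = γ`, `δU = (1+γ)/(1-γ)`, `εU = γ(1-γ)/(1+γ)` this
holds with equality, and after `⌈r/γ²⌉` steps `u / l ≤ ((1+γ)/(1-γ))²`; rescaling by
`(1-γ)² / l` gives the weights.
-/

open Matrix

namespace Matrix

section QuadForm

variable {n : Type*} [Fintype n]

def quadForm (M : Matrix n n ℝ) (x : n → ℝ) : ℝ := x ⬝ᵥ (M *ᵥ x)

lemma quadForm_sub (M N : Matrix n n ℝ) (x : n → ℝ) :
    quadForm (M - N) x = quadForm M x - quadForm N x := by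
  simp [quadForm, sub_mulVec, dotProduct_sub]

lemma quadForm_smul (c : ℝ) (M : Matrix n n ℝ) (x : n → ℝ) :
    quadForm (c • M) x = c * quadForm M x := by
  simp [quadForm, smul_mulVec, dotProduct_smul]

lemma quadForm_one [DecidableEq n] (x : n → ℝ) : quadForm 1 x = x ⬝ᵥ x := by
  simp [quadForm]

lemma quadForm_zero_right (M : Matrix n n ℝ) : quadForm M 0 = 0 := by
  simp [quadForm]

lemma quadForm_eq_trace (M : Matrix n n ℝ) (x : n → ℝ) :
    quadForm M x = (M * vecMulVec x x).trace := by
  rw [mul_vecMulVec, trace_vecMulVec, quadForm, dotProduct_comm]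

lemma quadForm_vecMulVec (v x : n → ℝ) : quadForm (vecMulVec v v) x = (v ⬝ᵥ x) ^ 2 := by
  rw [quadForm_eq_trace, vecMulVec_mul_vecMulVec, vecMulVec_smul, trace_smul, trace_vecMulVec,
    smul_eq_mul, sq]

lemma quadForm_sum_smul_vecMulVec {ι : Type*} [Fintype ι] (c : ι → ℝ) (v : ι → n → ℝ)
    (x : n → ℝ) :
    quadForm (∑ i, c i • vecMulVec (v i) (v i)) x = ∑ i, c i * (v i ⬝ᵥ x) ^ 2 := by
  rw [quadForm_eq_trace, Finset.sum_mul, trace_sum]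
  refine Finset.sum_congr rfl fun i _ => ?_
  rw [smul_mul_assoc, trace_smul, ← quadForm_eq_trace, quadForm_vecMulVec, smul_eq_mul]

lemma PosSemidef.quadForm_nonneg {M : Matrix n n ℝ} (hM : M.PosSemidef) (x : n → ℝ) :
    0 ≤ quadForm M x := by
  simpa [quadForm] using hM.dotProduct_mulVec_nonneg x

lemma PosDef.quadForm_pos {M : Matrix n n ℝ} (hM : M.PosDef) {x : n → ℝ} (hx : x ≠ 0) :
    0 < quadForm M x := by
  simpa [quadForm] using hM.dotProduct_mulVec_pos hx

lemma PosSemidef.of_quadForm_nonneg {M : Matrix n n ℝ} (hM : M.IsHermitian)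
    (h : ∀ x, 0 ≤ quadForm M x) : M.PosSemidef :=
  .of_dotProduct_mulVec_nonneg hM (by simpa [quadForm] using h)

lemma PosDef.of_quadForm_pos {M : Matrix n n ℝ} (hM : M.IsHermitian)
    (h : ∀ x, x ≠ 0 → 0 < quadForm M x) : M.PosDef :=
  .of_dotProduct_mulVec_pos hM (by simpa [quadForm] using h)

lemma posSemidef_vecMulVec_self (v : n → ℝ) : (vecMulVec v v).PosSemidef := by
  simpa using posSemidef_vecMulVec_self_star v

lemma vecMulVec_mul_mul_vecMulVec (B : Matrix n n ℝ) (v : n → ℝ) :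
    vecMulVec v v * B * vecMulVec v v = quadForm B v • vecMulVec v v := by
  rw [vecMulVec_mul, vecMulVec_mul_vecMulVec, ← dotProduct_mulVec, vecMulVec_smul]
  rfl

lemma sum_vecMulVec_eq_transpose_mul {m r : Type*} [Fintype m] (Q : Matrix m r ℝ) :
    ∑ i, vecMulVec (Q i) (Q i) = Qᵀ * Q := by
  ext k l
  simp [sum_apply, vecMulVec_apply, mul_apply]

variable [DecidableEq n] {ι : Type*} [Fintype ι] {v : ι → n → ℝ}

lemma sum_quadForm_eq_trace (hv : ∑ i, vecMulVec (v i) (v i) = 1) (X : Matrix n n ℝ) :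
    ∑ i, quadForm X (v i) = X.trace := by
  simp only [quadForm_eq_trace, ← trace_sum, ← Matrix.mul_sum, hv, Matrix.mul_one]

lemma sum_sq_dotProduct_eq_dotProduct_self (hv : ∑ i, vecMulVec (v i) (v i) = 1) (x : n → ℝ) :
    ∑ i, (v i ⬝ᵥ x) ^ 2 = x ⬝ᵥ x := by
  simpa [hv, quadForm_one] using (quadForm_sum_smul_vecMulVec (fun _ => 1) v x).symm

end QuadForm

section Positivity

variable {n : Type*} [Fintype n] [DecidableEq n]

lemma PosDef.mul_self {M : Matrix n n ℝ} (hM : M.PosDef) : (M * M).PosDef := by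
  simpa [← conjTranspose_eq_transpose_of_trivial, hM.isHermitian.eq] using
    PosDef.conjTranspose_mul_self M (mulVec_injective_of_isUnit hM.isUnit)

open scoped MatrixOrder in
lemma PosSemidef.trace_mul_nonneg {P Q : Matrix n n ℝ} (hP : P.PosSemidef) (hQ : Q.PosSemidef) :
    0 ≤ (P * Q).trace := by
  have hS : (CFC.sqrt P)ᵀ = CFC.sqrt P :=
    (nonneg_iff_posSemidef.mp (CFC.sqrt_nonneg P)).isHermitian.eq
  rw [← CFC.sqrt_mul_sqrt_self P (nonneg_iff_posSemidef.mpr hP), Matrix.mul_assoc,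
    trace_mul_comm, Matrix.mul_assoc]
  simpa [hS, Matrix.mul_assoc] using (hQ.conjTranspose_mul_mul_same (CFC.sqrt P)).trace_nonneg

lemma PosDef.sq_dotProduct_le {M : Matrix n n ℝ} (hM : M.PosDef) (v x : n → ℝ) :
    (v ⬝ᵥ x) ^ 2 ≤ quadForm M x * quadForm M⁻¹ v := by
  set y := M⁻¹ *ᵥ v
  have hMy : M *ᵥ y = v := by
    rw [mulVec_mulVec, mul_nonsing_inv _ ((isUnit_iff_isUnit_det M).mp hM.isUnit), one_mulVec]
  have hyMx : y ⬝ᵥ (M *ᵥ x) = v ⬝ᵥ x := by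
    rw [dotProduct_mulVec, ← mulVec_transpose, ← conjTranspose_eq_transpose_of_trivial,
      hM.isHermitian.eq, hMy]
  have hquad : ∀ t : ℝ, quadForm M (x - t • y) =
      quadForm M⁻¹ v * (t * t) + (-2 * (v ⬝ᵥ x)) * t + quadForm M x := by
    intro t
    simp only [quadForm, mulVec_sub, mulVec_smul, hMy, sub_dotProduct, dotProduct_sub,
      smul_dotProduct, dotProduct_smul, hyMx, smul_eq_mul]
    rw [dotProduct_comm x v, dotProduct_comm y v]
    ring
  have := discrim_le_zero fun t => hquad t ▸ hM.posSemidef.quadForm_nonneg (x - t • y)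
  rw [discrim] at this
  nlinarith

lemma posSemidef_dotProduct_self_smul_one_sub_vecMulVec (x : n → ℝ) :
    ((x ⬝ᵥ x) • (1 : Matrix n n ℝ) - vecMulVec x x).PosSemidef := by
  refine .of_quadForm_nonneg
    ((PosSemidef.one.smul (dotProduct_self_star_nonneg x)).isHermitian.sub
      (posSemidef_vecMulVec_self x).isHermitian) fun y => ?_
  have := PosDef.one.sq_dotProduct_le x y
  rw [inv_one, quadForm_one, quadForm_one] at this
  rw [quadForm_sub, quadForm_smul, quadForm_one, quadForm_vecMulVec]
  nlinarith

lemma PosSemidef.quadForm_le_trace_mul {Q : Matrix n n ℝ} (hQ : Q.PosSemidef) (x : n → ℝ) :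
    quadForm Q x ≤ Q.trace * (x ⬝ᵥ x) := by
  have := hQ.trace_mul_nonneg (posSemidef_dotProduct_self_smul_one_sub_vecMulVec x)
  rw [Matrix.mul_sub, trace_sub, Matrix.mul_smul, Matrix.mul_one, trace_smul,
    ← quadForm_eq_trace, smul_eq_mul] at this
  linarith

lemma IsHermitian.sq_trace_mul_le {A Q : Matrix n n ℝ} (hA : A.IsHermitian) (hQ : Q.PosSemidef) :
    (A * Q).trace ^ 2 ≤ (A * A * Q).trace * Q.trace := by
  have hquad : ∀ t : ℝ, ((A - t • 1) * (A - t • 1) * Q).trace =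
      Q.trace * (t * t) + (-2 * (A * Q).trace) * t + (A * A * Q).trace := by
    intro t
    simp only [Matrix.sub_mul, Matrix.mul_sub, Matrix.smul_mul, Matrix.mul_smul, Matrix.one_mul,
      Matrix.mul_one, trace_sub, trace_smul, smul_sub, smul_smul, smul_eq_mul]
    ring
  have hsq : ∀ t : ℝ, ((A - t • 1) * (A - t • 1)).PosSemidef := fun t => by
    have := posSemidef_conjTranspose_mul_self (A - t • 1)
    rwa [(hA.sub (isHermitian_one.smul (IsSelfAdjoint.all t))).eq] at this
  have := discrim_le_zero fun t => hquad t ▸ (hsq t).trace_mul_nonneg hQ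
  rw [discrim] at this
  nlinarith

lemma PosDef.sub_smul_one {M : Matrix n n ℝ} (hM : M.PosDef) {δ : ℝ} (hδ : 0 ≤ δ)
    (h : δ * M⁻¹.trace < 1) : (M - δ • 1).PosDef := by
  refine .of_quadForm_pos (hM.isHermitian.sub (isHermitian_one.smul (IsSelfAdjoint.all δ)))
    fun x hx => ?_
  have hxx : 0 < x ⬝ᵥ x := quadForm_one x ▸ PosDef.one.quadForm_pos hx
  have hq := hM.quadForm_pos hx
  have hcs := hM.sq_dotProduct_le x x
  have htr := hM.inv.posSemidef.quadForm_le_trace_mul x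
  have hx_le : x ⬝ᵥ x ≤ quadForm M x * M⁻¹.trace := by
    refine le_of_mul_le_mul_right ?_ hxx
    nlinarith
  rw [quadForm_sub, quadForm_smul, quadForm_one]
  nlinarith

lemma PosDef.sub_smul_vecMulVec {M : Matrix n n ℝ} (hM : M.PosDef) {s : ℝ} (hs : 0 ≤ s)
    {v : n → ℝ} (h : s * quadForm M⁻¹ v < 1) : (M - s • vecMulVec v v).PosDef := by
  refine .of_quadForm_pos
    (hM.isHermitian.sub ((posSemidef_vecMulVec_self v).smul hs).isHermitian) fun x hx => ?_
  have hcs := hM.sq_dotProduct_le v x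
  have hq := hM.quadForm_pos hx
  have hinv := hM.inv.posSemidef.quadForm_nonneg v
  rw [quadForm_sub, quadForm_smul, quadForm_vecMulVec]
  nlinarith [mul_le_mul_of_nonneg_left hcs hs]

end Positivity

lemma PosDef.add_smul_one {n : Type*} [DecidableEq n] {M : Matrix n n ℝ} (hM : M.PosDef) {δ : ℝ}
    (hδ : 0 ≤ δ) : (M + δ • 1).PosDef :=
  hM.add_posSemidef (PosSemidef.one.smul hδ)

section Inverse

variable {n : Type*} [Fintype n] [DecidableEq n]

lemma inv_add_smul_vecMulVec {M : Matrix n n ℝ} (hM : IsUnit M) {s : ℝ} {v : n → ℝ}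
    (h : 1 + s * quadForm M⁻¹ v ≠ 0) :
    (M + s • vecMulVec v v)⁻¹ =
      M⁻¹ - (s / (1 + s * quadForm M⁻¹ v)) • (M⁻¹ * vecMulVec v v * M⁻¹) := by
  have hMM : M * M⁻¹ = 1 := mul_nonsing_inv _ ((isUnit_iff_isUnit_det M).mp hM)
  have hc : s / (1 + s * quadForm M⁻¹ v) * (1 + s * quadForm M⁻¹ v) = s :=
    div_mul_cancel₀ _ h
  refine inv_eq_right_inv ?_
  have hV : vecMulVec v v * (M⁻¹ * vecMulVec v v * M⁻¹) =
      quadForm M⁻¹ v • (vecMulVec v v * M⁻¹) := by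
    rw [← Matrix.mul_assoc, ← Matrix.mul_assoc, vecMulVec_mul_mul_vecMulVec, smul_mul_assoc]
  simp only [Matrix.add_mul, Matrix.mul_sub, hMM, Matrix.mul_smul, Matrix.smul_mul, hV,
    ← Matrix.mul_assoc M, Matrix.one_mul, smul_smul]
  linear_combination (norm := module) (-hc) • (vecMulVec v v * M⁻¹)

lemma trace_inv_add_smul_vecMulVec {M : Matrix n n ℝ} (hM : IsUnit M) {s : ℝ} {v : n → ℝ}
    (h : 1 + s * quadForm M⁻¹ v ≠ 0) :
    (M + s • vecMulVec v v)⁻¹.trace =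
      M⁻¹.trace - s / (1 + s * quadForm M⁻¹ v) * quadForm (M⁻¹ * M⁻¹) v := by
  rw [inv_add_smul_vecMulVec hM h, trace_sub, trace_smul, smul_eq_mul, trace_mul_cycle,
    ← quadForm_eq_trace]

lemma PosDef.inv_sub_inv_add_smul_one {M : Matrix n n ℝ} (hM : M.PosDef) {δ : ℝ}
    (hδ : 0 ≤ δ) :
    M⁻¹ - (M + δ • 1)⁻¹ = δ • (M⁻¹ * (M + δ • 1)⁻¹) := by
  rw [inv_sub_inv (iff_of_true hM.isUnit (hM.add_smul_one hδ).isUnit),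
    add_sub_cancel_left, Matrix.mul_smul, Matrix.mul_one, Matrix.smul_mul]

lemma trace_inv_smul_one {c : ℝ} (hc : c ≠ 0) :
    ((c • 1 : Matrix n n ℝ)⁻¹).trace = Fintype.card n / c := by
  rw [inv_eq_right_inv (B := c⁻¹ • 1) (by rw [smul_mul_smul_comm, Matrix.one_mul,
    mul_inv_cancel₀ hc, one_smul]), trace_smul, trace_one, smul_eq_mul, inv_mul_eq_div]

end Inverse

section Shift

variable {n : Type*} [Fintype n] [DecidableEq n] {M : Matrix n n ℝ} {δ : ℝ}

lemma PosDef.trace_inv_sub_trace_inv_add_smul_one (hM : M.PosDef) (hδ : 0 ≤ δ) :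
    M⁻¹.trace - (M + δ • 1)⁻¹.trace = δ * (M⁻¹ * (M + δ • 1)⁻¹).trace := by
  rw [← trace_sub, hM.inv_sub_inv_add_smul_one hδ, trace_smul, smul_eq_mul]

lemma PosDef.trace_inv_add_smul_one_sq_le (hM : M.PosDef) (hδ : 0 ≤ δ) :
    ((M + δ • 1)⁻¹ * (M + δ • 1)⁻¹).trace ≤ (M⁻¹ * (M + δ • 1)⁻¹).trace := by
  have hM' := (hM.add_smul_one hδ).inv
  have hdiff : (M⁻¹ * (M + δ • 1)⁻¹).trace - ((M + δ • 1)⁻¹ * (M + δ • 1)⁻¹).trace =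
      δ * (M⁻¹ * ((M + δ • 1)⁻¹ * (M + δ • 1)⁻¹)).trace := by
    rw [← trace_sub, ← Matrix.sub_mul, hM.inv_sub_inv_add_smul_one hδ, Matrix.smul_mul,
      trace_smul, smul_eq_mul, Matrix.mul_assoc]
  have := hM.inv.posSemidef.trace_mul_nonneg hM'.mul_self.posSemidef
  nlinarith

lemma PosDef.trace_inv_sq_eq (hM : M.PosDef) (hδ : 0 ≤ δ) :
    (M⁻¹ * M⁻¹).trace =
      (M⁻¹ * (M + δ • 1)⁻¹).trace + δ * (M⁻¹ * M⁻¹ * (M + δ • 1)⁻¹).trace := by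
  rw [← sub_eq_iff_eq_add', ← trace_sub, ← Matrix.mul_sub, hM.inv_sub_inv_add_smul_one hδ,
    Matrix.mul_smul, trace_smul, smul_eq_mul, Matrix.mul_assoc]

lemma PosDef.trace_inv_add_smul_one_lt [Nonempty n] (hM : M.PosDef) (hδ : 0 < δ) :
    (M + δ • 1)⁻¹.trace < M⁻¹.trace := by
  have hpos := (hM.add_smul_one hδ.le).inv.mul_self.trace_pos
  have := hM.trace_inv_add_smul_one_sq_le hδ.le
  have := hM.trace_inv_sub_trace_inv_add_smul_one hδ.le
  nlinarith

end Shift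

theorem exists_orthonormal_columns_mul_eq {m t : Type*} [Fintype m] [Fintype t]
    [DecidableEq t] (A : Matrix m t ℝ) :
    ∃ r ≤ Fintype.card t, ∃ (Q : Matrix m (Fin r) ℝ) (B : Matrix (Fin r) t ℝ),
      Qᵀ * Q = 1 ∧ Q * B = A := by
  set W := LinearMap.range (toEuclideanLin A)
  set e := stdOrthonormalBasis ℝ W
  have hcol : ∀ j, (WithLp.toLp 2 (Aᵀ j) : EuclideanSpace ℝ m) ∈ W := fun j => by
    refine ⟨WithLp.toLp 2 (Pi.single j 1), ?_⟩
    ext i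
    simp
  refine ⟨Module.finrank ℝ W, ?_, of fun i k => (e k : EuclideanSpace ℝ m) i,
    of fun k j => e.repr ⟨_, hcol j⟩ k, ?_, ?_⟩
  · simpa using (LinearMap.finrank_range_le (toEuclideanLin A))
  · ext k l
    have horth := orthonormal_iff_ite.mp e.orthonormal k l
    simp only [mul_apply, one_apply, transpose_apply, of_apply]
    rw [← horth, Submodule.coe_inner, PiLp.inner_apply]
    exact Finset.sum_congr rfl fun i _ => mul_comm _ _
  · ext i j
    have hexpand := congrArg (fun x : W => (x : EuclideanSpace ℝ m) i) (e.sum_repr ⟨_, hcol j⟩)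
    simp only [AddSubmonoidClass.coe_finsetSum, SetLike.val_smul, WithLp.ofLp_sum,
      WithLp.ofLp_smul, Finset.sum_apply, Pi.smul_apply, smul_eq_mul, transpose_apply] at hexpand
    simp only [mul_apply, of_apply]
    rw [← hexpand]
    exact Finset.sum_congr rfl fun _ _ => mul_comm _ _

end Matrix

namespace BSS

variable {n : Type*} [Fintype n] [DecidableEq n] {ι : Type*} [Fintype ι]

/-- The quantity `U_A(w)` of Batson–Spielman–Srivastava, for `M = u • 1 - A` and the upper
barrier moving from `u` to `u + δ`. -/
noncomputable def upperGain (M : Matrix n n ℝ) (δ : ℝ) (w : n → ℝ) : ℝ :=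
  quadForm ((M + δ • 1)⁻¹ * (M + δ • 1)⁻¹) w / (M⁻¹.trace - (M + δ • 1)⁻¹.trace) +
    quadForm (M + δ • 1)⁻¹ w

/-- The quantity `L_A(w)` of Batson–Spielman–Srivastava, for `Q = A - (l + δ) • 1` and the lower
barrier moving from `l` to `l + δ`. -/
noncomputable def lowerGain (Q : Matrix n n ℝ) (δ : ℝ) (w : n → ℝ) : ℝ :=
  quadForm (Q⁻¹ * Q⁻¹) w / (Q⁻¹.trace - (Q + δ • 1)⁻¹.trace) - quadForm Q⁻¹ w

@[simp] lemma upperGain_zero (M : Matrix n n ℝ) (δ : ℝ) : upperGain M δ 0 = 0 := by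
  simp [upperGain, quadForm_zero_right]

@[simp] lemma lowerGain_zero (Q : Matrix n n ℝ) (δ : ℝ) : lowerGain Q δ 0 = 0 := by
  simp [lowerGain, quadForm_zero_right]

lemma upperGain_pos [Nonempty n] {M : Matrix n n ℝ} (hM : M.PosDef) {δ : ℝ} (hδ : 0 < δ)
    {w : n → ℝ} (hw : w ≠ 0) : 0 < upperGain M δ w := by
  have hM' := (hM.add_smul_one hδ.le).inv
  have := hM'.mul_self.quadForm_pos hw
  have := sub_pos.2 (hM.trace_inv_add_smul_one_lt hδ)
  have := hM'.quadForm_pos hw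
  unfold upperGain
  positivity

lemma sum_upperGain_le {v : ι → n → ℝ} (hv : ∑ i, vecMulVec (v i) (v i) = 1)
    {M : Matrix n n ℝ} (hM : M.PosDef) {δ : ℝ} (hδ : 0 < δ) :
    ∑ i, upperGain M δ (v i) ≤ 1 / δ + M⁻¹.trace := by
  have hD := hM.trace_inv_sub_trace_inv_add_smul_one hδ.le
  have hTD := hM.trace_inv_add_smul_one_sq_le hδ.le
  have hT := (hM.add_smul_one hδ.le).inv.mul_self.posSemidef.trace_nonneg
  simp only [upperGain, Finset.sum_add_distrib, ← Finset.sum_div, sum_quadForm_eq_trace hv]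
  have : ((M + δ • 1)⁻¹ * (M + δ • 1)⁻¹).trace / (M⁻¹.trace - (M + δ • 1)⁻¹.trace) ≤ 1 / δ := by
    refine div_le_of_le_mul₀ (by nlinarith) (by positivity) ?_
    rw [hD, one_div, inv_mul_cancel_left₀ hδ.ne']
    exact hTD
  nlinarith

lemma le_sum_lowerGain [Nonempty n] {v : ι → n → ℝ} (hv : ∑ i, vecMulVec (v i) (v i) = 1)
    {Q : Matrix n n ℝ} (hQ : Q.PosDef) {δ : ℝ} (hδ : 0 < δ)
    (h : δ * (Q + δ • 1)⁻¹.trace ≤ 1) :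
    1 / δ - (Q + δ • 1)⁻¹.trace ≤ ∑ i, lowerGain Q δ (v i) := by
  have hQ' := (hQ.add_smul_one hδ.le).inv
  set D := (Q⁻¹ * (Q + δ • 1)⁻¹).trace
  set E := (Q⁻¹ * Q⁻¹ * (Q + δ • 1)⁻¹).trace
  have hΔ := hQ.trace_inv_sub_trace_inv_add_smul_one hδ.le
  have hsq := hQ.trace_inv_sq_eq hδ.le
  have hD : 0 < D := hQ'.mul_self.trace_pos.trans_le (hQ.trace_inv_add_smul_one_sq_le hδ.le)
  have hCS : D ^ 2 ≤ E * (Q + δ • 1)⁻¹.trace := hQ.inv.isHermitian.sq_trace_mul_le hQ'.posSemidef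
  have hE : 0 ≤ E := (hQ.inv.mul_self.posSemidef).trace_mul_nonneg hQ'.posSemidef
  -- The sum is `1/δ + E/D - δD - tr (Q + δ • 1)⁻¹`, and Cauchy–Schwarz gives `E/D ≥ δD`.
  simp only [lowerGain, Finset.sum_sub_distrib, ← Finset.sum_div, sum_quadForm_eq_trace hv]
  rw [hΔ, hsq]
  have hδD : δ * D ^ 2 ≤ E := by nlinarith [mul_le_mul_of_nonneg_left h hE]
  have : (D + δ * E) / (δ * D) = 1 / δ + E / D := by field_simp
  rw [this]
  have : δ * D ≤ E / D := by rw [le_div_iff₀ hD]; nlinarith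
  linarith

lemma posDef_and_trace_inv_le_of_upperGain_le [Nonempty n] {M : Matrix n n ℝ} (hM : M.PosDef)
    {δ : ℝ} (hδ : 0 < δ) {w : n → ℝ} (hw : w ≠ 0) {s : ℝ} (hs : 0 < s)
    (hU : upperGain M δ w ≤ s⁻¹) :
    (M + δ • 1 - s • vecMulVec w w).PosDef ∧
      (M + δ • 1 - s • vecMulVec w w)⁻¹.trace ≤ M⁻¹.trace := by
  have hM' := hM.add_smul_one hδ.le
  set q₁ := quadForm (M + δ • 1)⁻¹ w
  set q₂ := quadForm ((M + δ • 1)⁻¹ * (M + δ • 1)⁻¹) w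
  set Δ := M⁻¹.trace - (M + δ • 1)⁻¹.trace
  have hq₂ : 0 < q₂ := hM'.inv.mul_self.quadForm_pos hw
  have hΔ : 0 < Δ := sub_pos.2 (hM.trace_inv_add_smul_one_lt hδ)
  have hkey : s * q₂ + Δ * (s * q₁) ≤ Δ := by
    have hU' : q₂ / Δ ≤ s⁻¹ - q₁ := by rw [upperGain] at hU; linarith
    rw [div_le_iff₀ hΔ] at hU'
    have hs' : s * ((s⁻¹ - q₁) * Δ) = Δ - Δ * (s * q₁) := by field_simp
    nlinarith [mul_le_mul_of_nonneg_left hU' hs.le]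
  have hsq₁ : s * q₁ < 1 := by nlinarith [mul_pos hs hq₂]
  refine ⟨hM'.sub_smul_vecMulVec hs.le hsq₁, ?_⟩
  rw [sub_eq_add_neg, ← neg_smul, trace_inv_add_smul_vecMulVec hM'.isUnit (by linarith)]
  have : s / (1 - s * q₁) * q₂ ≤ Δ := by
    rw [div_mul_eq_mul_div, div_le_iff₀ (by linarith)]
    linarith
  have hneg : -s / (1 + -s * q₁) = -(s / (1 - s * q₁)) := by ring
  rw [hneg]
  linarith

lemma posDef_and_trace_inv_le_of_le_lowerGain [Nonempty n] {Q : Matrix n n ℝ} (hQ : Q.PosDef)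
    {δ : ℝ} (hδ : 0 < δ) {w : n → ℝ} {s : ℝ} (hs : 0 < s) (hL : s⁻¹ ≤ lowerGain Q δ w) :
    (Q + s • vecMulVec w w).PosDef ∧ (Q + s • vecMulVec w w)⁻¹.trace ≤ (Q + δ • 1)⁻¹.trace := by
  set q₁ := quadForm Q⁻¹ w
  set q₂ := quadForm (Q⁻¹ * Q⁻¹) w
  set Δ := Q⁻¹.trace - (Q + δ • 1)⁻¹.trace
  have hq₁ : 0 ≤ q₁ := hQ.inv.posSemidef.quadForm_nonneg w
  have hΔ : 0 < Δ := sub_pos.2 (hQ.trace_inv_add_smul_one_lt hδ)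
  have hkey : Δ * (1 + s * q₁) ≤ s * q₂ := by
    have hL' : s⁻¹ + q₁ ≤ q₂ / Δ := by rw [lowerGain] at hL; linarith
    rw [le_div_iff₀ hΔ] at hL'
    have hs' : s * ((s⁻¹ + q₁) * Δ) = Δ * (1 + s * q₁) := by field_simp
    nlinarith [mul_le_mul_of_nonneg_left hL' hs.le]
  refine ⟨hQ.add_posSemidef ((posSemidef_vecMulVec_self w).smul hs.le), ?_⟩
  have hpos : 0 < 1 + s * q₁ := by positivity
  rw [trace_inv_add_smul_vecMulVec hQ.isUnit hpos.ne']
  have : Δ ≤ s / (1 + s * q₁) * q₂ := by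
    rw [div_mul_eq_mul_div, le_div_iff₀ hpos]
    linarith
  linarith

lemma exists_ne_zero_of_sum_vecMulVec_eq_one [Nonempty n] {v : ι → n → ℝ}
    (hv : ∑ i, vecMulVec (v i) (v i) = 1) : ∃ i, v i ≠ 0 := by
  by_contra! h
  have : (1 : Matrix n n ℝ) = 0 := by simp [← hv, h]
  exact one_ne_zero this

lemma exists_ne_zero_and_le_of_sum_le {E : Type*} [Zero E] {v : ι → E} (hv : ∃ i, v i ≠ 0)
    {f g : E → ℝ} (hf : f 0 = 0) (hg : g 0 = 0) (h : ∑ i, f (v i) ≤ ∑ i, g (v i)) :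
    ∃ i, v i ≠ 0 ∧ f (v i) ≤ g (v i) := by
  classical
  have hsum : ∀ F : E → ℝ, F 0 = 0 →
      ∑ i ∈ Finset.univ.filter (fun i => v i ≠ 0), F (v i) = ∑ i, F (v i) := fun F hF =>
    Finset.sum_filter_of_ne fun i _ hi hvi => hi (by rw [hvi, hF])
  obtain ⟨i, hi, hle⟩ := Finset.exists_le_of_sum_le (by simpa [Finset.filter_nonempty_iff] using hv)
    ((hsum f hf).trans_le (h.trans_eq (hsum g hg).symm))
  exact ⟨i, (Finset.mem_filter.mp hi).2, hle⟩

structure BarrierBounds (S : Matrix n n ℝ) (u l εU εL : ℝ) : Prop where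
  upper_posDef : (u • 1 - S).PosDef
  lower_posDef : (S - l • 1).PosDef
  upper_trace_le : (u • 1 - S)⁻¹.trace ≤ εU
  lower_trace_le : (S - l • 1)⁻¹.trace ≤ εL

namespace BarrierBounds

variable {S : Matrix n n ℝ} {u l εU εL : ℝ}

lemma zero [Nonempty n] (hεU : 0 < εU) (hεL : 0 < εL) :
    BarrierBounds (0 : Matrix n n ℝ) (Fintype.card n / εU) (-(Fintype.card n / εL)) εU εL := by
  have hn : (0 : ℝ) < Fintype.card n := Nat.cast_pos.mpr Fintype.card_pos
  refine ⟨?_, ?_, ?_, ?_⟩ <;>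
    simp only [sub_zero, zero_sub, ← neg_smul, neg_neg]
  · exact PosDef.one.smul (by positivity)
  · exact PosDef.one.smul (by positivity)
  · rw [trace_inv_smul_one (by positivity), div_div_cancel₀ hn.ne']
  · rw [trace_inv_smul_one (by positivity), div_div_cancel₀ hn.ne']

lemma quadForm_le (h : BarrierBounds S u l εU εL) (x : n → ℝ) :
    quadForm S x ≤ u * (x ⬝ᵥ x) := by
  have := h.upper_posDef.posSemidef.quadForm_nonneg x
  rw [quadForm_sub, quadForm_smul, quadForm_one] at this
  linarith

lemma le_quadForm (h : BarrierBounds S u l εU εL) (x : n → ℝ) :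
    l * (x ⬝ᵥ x) ≤ quadForm S x := by
  have := h.lower_posDef.posSemidef.quadForm_nonneg x
  rw [quadForm_sub, quadForm_smul, quadForm_one] at this
  linarith

theorem exists_add_smul_vecMulVec [Nonempty n] {v : ι → n → ℝ}
    (hv : ∑ i, vecMulVec (v i) (v i) = 1) (h : BarrierBounds S u l εU εL) {δU δL : ℝ}
    (hδU : 0 < δU) (hδL : 0 < δL) (hεδ : δL * εL < 1) (hbal : 1 / δU + εU ≤ 1 / δL - εL) :
    ∃ i, ∃ s : ℝ, 0 ≤ s ∧
      BarrierBounds (S + s • vecMulVec (v i) (v i)) (u + δU) (l + δL) εU εL := by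
  set M := u • 1 - S
  set Q := S - (l + δL) • 1
  have hQδ : Q + δL • 1 = S - l • 1 := by simp only [Q, add_smul]; abel
  have hQ : Q.PosDef := by
    have := h.lower_posDef.sub_smul_one hδL.le (by nlinarith [h.lower_trace_le])
    rwa [sub_sub, ← add_smul] at this
  have hsum : ∑ i, upperGain M δU (v i) ≤ ∑ i, lowerGain Q δL (v i) := calc
    _ ≤ 1 / δU + M⁻¹.trace := sum_upperGain_le hv h.upper_posDef hδU
    _ ≤ 1 / δL - (Q + δL • 1)⁻¹.trace := by rw [hQδ]; linarith [h.upper_trace_le, h.lower_trace_le]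
    _ ≤ _ := le_sum_lowerGain hv hQ hδL (by rw [hQδ]; nlinarith [h.lower_trace_le])
  obtain ⟨i, hi, hUL⟩ := exists_ne_zero_and_le_of_sum_le
    (exists_ne_zero_of_sum_vecMulVec_eq_one hv) (upperGain_zero M δU) (lowerGain_zero Q δL) hsum
  have hU := upperGain_pos h.upper_posDef hδU hi
  set s := (upperGain M δU (v i))⁻¹
  obtain ⟨hupper, hupper_tr⟩ := posDef_and_trace_inv_le_of_upperGain_le h.upper_posDef hδU hi
    (inv_pos.2 hU) (inv_inv _).ge
  obtain ⟨hlower, hlower_tr⟩ := posDef_and_trace_inv_le_of_le_lowerGain hQ hδL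
    (inv_pos.2 hU) (by rwa [inv_inv])
  have hM : (u + δU) • 1 - (S + s • vecMulVec (v i) (v i)) =
      M + δU • 1 - s • vecMulVec (v i) (v i) := by simp only [M, add_smul]; abel
  have hQ' : S + s • vecMulVec (v i) (v i) - (l + δL) • 1 = Q + s • vecMulVec (v i) (v i) := by
    simp only [Q]; abel
  refine ⟨i, s, (inv_pos.2 hU).le, ?_, ?_, ?_, ?_⟩
  · rwa [hM]
  · rwa [hQ']
  · rw [hM]; exact hupper_tr.trans h.upper_trace_le
  · rw [hQ']; exact hlower_tr.trans (hQδ ▸ h.lower_trace_le)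

end BarrierBounds

theorem exists_weights_barrierBounds [Nonempty n] {v : ι → n → ℝ}
    (hv : ∑ i, vecMulVec (v i) (v i) = 1) {εU εL δU δL : ℝ} (hεU : 0 < εU) (hεL : 0 < εL)
    (hδU : 0 < δU) (hδL : 0 < δL) (hεδ : δL * εL < 1) (hbal : 1 / δU + εU ≤ 1 / δL - εL)
    (k : ℕ) :
    ∃ c : ι → ℝ, (∀ i, 0 ≤ c i) ∧ (Finset.univ.filter fun i => c i ≠ 0).card ≤ k ∧
      BarrierBounds (∑ i, c i • vecMulVec (v i) (v i))
        (Fintype.card n / εU + k * δU) (-(Fintype.card n / εL) + k * δL) εU εL := by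
  classical
  induction k with
  | zero => exact ⟨0, fun _ => le_rfl, by simp, by simpa using BarrierBounds.zero hεU hεL⟩
  | succ k ih =>
    obtain ⟨c, hc, hcard, hbounds⟩ := ih
    obtain ⟨i, s, hs, hnext⟩ := hbounds.exists_add_smul_vecMulVec hv hδU hδL hεδ hbal
    refine ⟨c + Pi.single i s, fun j => add_nonneg (hc j) ?_, ?_, ?_⟩
    · by_cases hj : j = i
      · subst hj; simpa using hs
      · simp [hj]
    · have hsub : (Finset.univ.filter fun j => (c + Pi.single i s : ι → ℝ) j ≠ 0) ⊆
          insert i (Finset.univ.filter fun j => c j ≠ 0) := by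
        intro j
        by_cases hj : j = i <;> simp [hj]
      calc _ ≤ _ := Finset.card_le_card hsub
        _ ≤ _ := Finset.card_insert_le _ _
        _ ≤ k + 1 := by omega
    · convert hnext using 1
      · simp [add_smul, Finset.sum_add_distrib, Pi.single_apply, ite_smul]
      · push_cast; ring
      · push_cast; ring

lemma lower_barrier_pos_and_ratio_le {γ N q : ℝ} (hγ₀ : 0 < γ) (hγ₁ : γ < 1) (hN : 0 < N)
    (hq : N / γ ^ 2 ≤ q) :
    0 < -(N / γ) + q * 1 ∧
      (1 - γ) ^ 2 * (N / (γ * (1 - γ) / (1 + γ)) + q * ((1 + γ) / (1 - γ))) ≤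
        (1 + γ) ^ 2 * (-(N / γ) + q * 1) := by
  have h1γ : 0 < 1 - γ := by linarith
  have hNγ : N / γ ≤ γ * q := by
    rw [div_le_iff₀ (by positivity)] at hq
    rw [div_le_iff₀ hγ₀]
    nlinarith
  constructor
  · have : N / γ < N / γ ^ 2 := div_lt_div_of_pos_left hN (by positivity) (by nlinarith)
    linarith
  · have hexp : (1 + γ) ^ 2 * (-(N / γ) + q * 1) -
        (1 - γ) ^ 2 * (N / (γ * (1 - γ) / (1 + γ)) + q * ((1 + γ) / (1 - γ))) =
        2 * (1 + γ) * (γ * q - N / γ) := by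
      field_simp
      ring
    nlinarith

theorem exists_sparse_weights_of_sum_vecMulVec_eq_one {v : ι → n → ℝ}
    (hv : ∑ i, vecMulVec (v i) (v i) = 1) {γ : ℝ} (hγ₀ : 0 < γ) (hγ₁ : γ < 1) :
    ∃ c : ι → ℝ, (∀ i, 0 ≤ c i) ∧
      (Finset.univ.filter fun i => c i ≠ 0).card ≤ ⌈(Fintype.card n : ℝ) / γ ^ 2⌉₊ ∧
      ∀ x : n → ℝ, (1 - γ) ^ 2 * (x ⬝ᵥ x) ≤ ∑ i, c i * (v i ⬝ᵥ x) ^ 2 ∧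
        ∑ i, c i * (v i ⬝ᵥ x) ^ 2 ≤ (1 + γ) ^ 2 * (x ⬝ᵥ x) := by
  cases isEmpty_or_nonempty n
  · exact ⟨0, fun _ => le_rfl, by simp, fun x => by simp [Subsingleton.elim x 0]⟩
  have h1γ : 0 < 1 - γ := by linarith
  have hN : (0 : ℝ) < Fintype.card n := Nat.cast_pos.mpr Fintype.card_pos
  obtain ⟨c, hc, hcard, hS⟩ := exists_weights_barrierBounds hv (εU := γ * (1 - γ) / (1 + γ))
    (δU := (1 + γ) / (1 - γ)) (δL := 1) (by positivity) hγ₀ (by positivity) one_pos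
    (by linarith) (le_of_eq (by field_simp)) ⌈(Fintype.card n : ℝ) / γ ^ 2⌉₊
  obtain ⟨hl, hratio⟩ := lower_barrier_pos_and_ratio_le hγ₀ hγ₁ hN (Nat.le_ceil _)
  set l := -((Fintype.card n : ℝ) / γ) + ⌈(Fintype.card n : ℝ) / γ ^ 2⌉₊ * 1
  set κ := (1 - γ) ^ 2 / l
  have hκ : 0 < κ := by positivity
  refine ⟨κ • c, fun i => mul_nonneg hκ.le (hc i), by simpa [hκ.ne'] using hcard, fun x => ?_⟩
  have hsum : ∑ i, (κ • c) i * (v i ⬝ᵥ x) ^ 2 =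
      κ * quadForm (∑ i, c i • vecMulVec (v i) (v i)) x := by
    rw [quadForm_sum_smul_vecMulVec, Finset.mul_sum]
    simp only [Pi.smul_apply, smul_eq_mul, mul_assoc]
  have hxx : 0 ≤ x ⬝ᵥ x := dotProduct_self_star_nonneg x
  rw [hsum]
  constructor
  · calc (1 - γ) ^ 2 * (x ⬝ᵥ x) = κ * (l * (x ⬝ᵥ x)) := by
          rw [← mul_assoc, div_mul_cancel₀ _ hl.ne']
      _ ≤ _ := mul_le_mul_of_nonneg_left (hS.le_quadForm x) hκ.le
  · calc _ ≤ κ * (_ * (x ⬝ᵥ x)) := mul_le_mul_of_nonneg_left (hS.quadForm_le x) hκ.le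
      _ ≤ (1 + γ) ^ 2 * (x ⬝ᵥ x) := by
          rw [← mul_assoc]
          refine mul_le_mul_of_nonneg_right ?_ hxx
          rw [div_mul_eq_mul_div, div_le_iff₀ hl]
          exact hratio

end BSS

/-- `ℓ₂` subspace sparsification for an arbitrary matrix: for any `m × t` real matrix
`A` and `γ ∈ (0,1)` there exist nonnegative weights `w`, at most `⌈t/γ²⌉` of them
nonzero, with `(1-γ)‖Av‖₂ ≤ (∑ i, w i ⟨a_i, v⟩²)^{1/2} ≤ (1+γ)‖Av‖₂` for all `v`. -/
theorem l2_sparsification_general (m t : ℕ)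
    (A : Matrix (Fin m) (Fin t) ℝ) (γ : ℝ) (hγ₀ : 0 < γ) (hγ₁ : γ < 1) :
    ∃ w : Fin m → ℝ,
      (∀ i, 0 ≤ w i) ∧
      (Finset.univ.filter (fun i => w i ≠ 0)).card ≤ ⌈(t : ℝ) / γ ^ 2⌉₊ ∧
      (∀ v : Fin t → ℝ,
        (1 - γ) * Real.sqrt (∑ i, (∑ j, A i j * v j) ^ 2) ≤
            Real.sqrt (∑ i, w i * (∑ j, A i j * v j) ^ 2) ∧
          Real.sqrt (∑ i, w i * (∑ j, A i j * v j) ^ 2) ≤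
            (1 + γ) * Real.sqrt (∑ i, (∑ j, A i j * v j) ^ 2)) := by
  obtain ⟨r, hr, Q, B, hQ, rfl⟩ := A.exists_orthonormal_columns_mul_eq
  have hrows : ∑ i, vecMulVec (Q i) (Q i) = 1 := by
    rw [Q.sum_vecMulVec_eq_transpose_mul, hQ]
  obtain ⟨w, hw, hcard, hbounds⟩ :=
    BSS.exists_sparse_weights_of_sum_vecMulVec_eq_one hrows hγ₀ hγ₁
  refine ⟨w, hw, hcard.trans (Nat.ceil_mono ?_), fun v => ?_⟩
  · gcongr
    simpa using hr
  have hrow : ∀ i, ∑ j, (Q * B) i j * v j = Q i ⬝ᵥ (B *ᵥ v) := fun i => by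
    change ((Q * B) *ᵥ v) i = (Q *ᵥ (B *ᵥ v)) i
    rw [mulVec_mulVec]
  simp only [hrow, sum_sq_dotProduct_eq_dotProduct_self hrows]
  obtain ⟨hlo, hhi⟩ := hbounds (B *ᵥ v)
  constructor
  · rw [← Real.sqrt_sq (by linarith : 0 ≤ 1 - γ), ← Real.sqrt_mul (sq_nonneg _)]
    exact Real.sqrt_le_sqrt hlo
  · rw [← Real.sqrt_sq (by linarith : 0 ≤ 1 + γ), ← Real.sqrt_mul (sq_nonneg _)]
    exact Real.sqrt_le_sqrt hhi
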